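/- arXiv:1605.07627 — 6 statements merged into one kernel-verified Lean document; each statement's English description precedes it below -/
import Mathlib

section
/- Let E be a complex inner product space, ψ, ψ' unit vectors in E with φ := ⟪ψ, ψ'⟫ ≠ 0, and let θ, θ' be real numbers. Set ψ̃ := exp(iθ) • ψ, ψ̃' := exp(iθ') • ψ', and φ̃ := ⟪ψ̃, ψ̃'⟫. Then for every α ∈ [0,1]: (i) |φ̃| = |φ|, (ii) the path built from the phase-rotated states satisfies Ψ̃(α) := Ñ(α)⁻¹ • ((1-α) • ψ̃ + (α * conj φ̃) • ψ̃') = exp(iθ) • Ψ(α), and (iii) the rank-one operator is gauge invariant: ⟪Ψ̃(α), x⟫ • Ψ̃(α) = ⟪Ψ(α), x⟫ • Ψ(α) for all x ∈ E. -/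
open scoped InnerProductSpace ComplexConjugate

/-! Rotating the states by phases `u = exp(iθ)`, `v = exp(iθ')` turns `φ` into `conj u * v * φ`.
In `Ψ̃(α)` the phase `v` of `ψ̃'` is then cancelled by the factor `conj v` of `conj φ̃`, so only
the global phase `u` survives, and it drops out of `⟪Ψ, x⟫ • Ψ` because `conj u * u = 1`. -/

section UnitScalars

variable {𝕜 E : Type*} [RCLike 𝕜] [NormedAddCommGroup E] [InnerProductSpace 𝕜 E]

theorem RCLike.conj_mul_self_of_norm_eq_one {u : 𝕜} (hu : ‖u‖ = 1) : conj u * u = 1 := by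
  rw [RCLike.conj_mul, hu]
  norm_num

theorem norm_inner_smul_smul_of_norm_eq_one {u v : 𝕜} (hu : ‖u‖ = 1) (hv : ‖v‖ = 1) (x y : E) :
    ‖⟪u • x, v • y⟫_𝕜‖ = ‖⟪x, y⟫_𝕜‖ := by
  rw [inner_smul_left, inner_smul_right, norm_mul, norm_mul, RCLike.norm_conj, hu, hv,
    one_mul, one_mul]

theorem inner_smul_smul_self_of_norm_eq_one {u : 𝕜} (hu : ‖u‖ = 1) (x y : E) :
    ⟪u • x, y⟫_𝕜 • (u • x) = ⟪x, y⟫_𝕜 • x := by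
  rw [inner_smul_left, smul_smul, mul_right_comm,
    RCLike.conj_mul_self_of_norm_eq_one hu, one_mul]

end UnitScalars

section PathState

variable {E : Type*} [NormedAddCommGroup E] [InnerProductSpace ℂ E]

noncomputable def pathState (ψ ψ' : E) (α : ℝ) : E :=
  (Real.sqrt ((1 - α) ^ 2 + α * (2 - α) * ‖⟪ψ, ψ'⟫_ℂ‖ ^ 2))⁻¹ •
    (((1 - α : ℝ) : ℂ) • ψ + ((α : ℂ) * conj ⟪ψ, ψ'⟫_ℂ) • ψ')

theorem pathState_smul_smul {u v : ℂ} (hu : ‖u‖ = 1) (hv : ‖v‖ = 1) (ψ ψ' : E) (α : ℝ) :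
    pathState (u • ψ) (v • ψ') α = u • pathState ψ ψ' α := by
  have hvec : ((1 - α : ℝ) : ℂ) • u • ψ + ((α : ℂ) * conj ⟪u • ψ, v • ψ'⟫_ℂ) • v • ψ' =
      u • (((1 - α : ℝ) : ℂ) • ψ + ((α : ℂ) * conj ⟪ψ, ψ'⟫_ℂ) • ψ') := by
    have hv' : conj v * v = 1 := RCLike.conj_mul_self_of_norm_eq_one hv
    simp only [inner_smul_left, inner_smul_right, map_mul, Complex.conj_conj, smul_add, smul_smul]
    congr 2
    · ring
    · linear_combination (α : ℂ) * u * conj ⟪ψ, ψ'⟫_ℂ * hv'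
  rw [pathState, pathState, norm_inner_smul_smul_of_norm_eq_one hu hv, hvec, smul_comm]

end PathState

theorem path_state_gauge_invariance_general {E : Type*} [NormedAddCommGroup E]
    [InnerProductSpace ℂ E] (ψ ψ' : E) (θ θ' : ℝ)
    (ψt ψt' : E)
    (hψt : ψt = Complex.exp ((θ : ℂ) * Complex.I) • ψ)
    (hψt' : ψt' = Complex.exp ((θ' : ℂ) * Complex.I) • ψ')
    (Ψ Ψt : ℝ → E)
    (hΨ : ∀ α : ℝ, Ψ α =
      (Real.sqrt ((1 - α) ^ 2 + α * (2 - α) * ‖⟪ψ, ψ'⟫_ℂ‖ ^ 2))⁻¹ •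
        (((1 - α : ℝ) : ℂ) • ψ + ((α : ℂ) * conj ⟪ψ, ψ'⟫_ℂ) • ψ'))
    (hΨt : ∀ α : ℝ, Ψt α =
      (Real.sqrt ((1 - α) ^ 2 + α * (2 - α) * ‖⟪ψt, ψt'⟫_ℂ‖ ^ 2))⁻¹ •
        (((1 - α : ℝ) : ℂ) • ψt + ((α : ℂ) * conj ⟪ψt, ψt'⟫_ℂ) • ψt')) :
    ‖⟪ψt, ψt'⟫_ℂ‖ = ‖⟪ψ, ψ'⟫_ℂ‖ ∧
    ∀ α ∈ Set.Icc (0 : ℝ) 1,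
      Ψt α = Complex.exp ((θ : ℂ) * Complex.I) • Ψ α ∧
      ∀ x : E, ⟪Ψt α, x⟫_ℂ • Ψt α = ⟪Ψ α, x⟫_ℂ • Ψ α := by
  have hu := Complex.norm_exp_ofReal_mul_I θ
  have hv := Complex.norm_exp_ofReal_mul_I θ'
  obtain rfl : Ψ = pathState ψ ψ' := funext hΨ
  obtain rfl : Ψt = pathState ψt ψt' := funext hΨt
  subst hψt hψt'
  have hpath (α : ℝ) := pathState_smul_smul hu hv ψ ψ' α
  refine ⟨norm_inner_smul_smul_of_norm_eq_one hu hv ψ ψ', fun α _ => ⟨hpath α, fun x => ?_⟩⟩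
  rw [hpath, inner_smul_smul_self_of_norm_eq_one hu]

/-- Gauge invariance of the adiabatic path: rotating the two states by `U(1)` phases
`exp(iθ)`, `exp(iθ')` leaves the overlap modulus unchanged, rotates the path state by
the overall phase `exp(iθ)`, and leaves the rank-one projector `|Ψ(α)⟩⟨Ψ(α)|` invariant. -/
theorem path_state_gauge_invariance {E : Type*} [NormedAddCommGroup E]
    [InnerProductSpace ℂ E] (ψ ψ' : E) (hψ : ‖ψ‖ = 1) (hψ' : ‖ψ'‖ = 1)
    (hφ : ⟪ψ, ψ'⟫_ℂ ≠ 0) (θ θ' : ℝ)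
    (ψt ψt' : E)
    (hψt : ψt = Complex.exp ((θ : ℂ) * Complex.I) • ψ)
    (hψt' : ψt' = Complex.exp ((θ' : ℂ) * Complex.I) • ψ')
    (Ψ Ψt : ℝ → E)
    (hΨ : ∀ α : ℝ, Ψ α =
      (Real.sqrt ((1 - α) ^ 2 + α * (2 - α) * ‖⟪ψ, ψ'⟫_ℂ‖ ^ 2))⁻¹ •
        (((1 - α : ℝ) : ℂ) • ψ + ((α : ℂ) * conj ⟪ψ, ψ'⟫_ℂ) • ψ'))
    (hΨt : ∀ α : ℝ, Ψt α =
      (Real.sqrt ((1 - α) ^ 2 + α * (2 - α) * ‖⟪ψt, ψt'⟫_ℂ‖ ^ 2))⁻¹ •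
        (((1 - α : ℝ) : ℂ) • ψt + ((α : ℂ) * conj ⟪ψt, ψt'⟫_ℂ) • ψt')) :
    ‖⟪ψt, ψt'⟫_ℂ‖ = ‖⟪ψ, ψ'⟫_ℂ‖ ∧
    ∀ α ∈ Set.Icc (0 : ℝ) 1,
      Ψt α = Complex.exp ((θ : ℂ) * Complex.I) • Ψ α ∧
      ∀ x : E, ⟪Ψt α, x⟫_ℂ • Ψt α = ⟪Ψ α, x⟫_ℂ • Ψ α :=
  path_state_gauge_invariance_general ψ ψ' θ θ' ψt ψt' hψt hψt' Ψ Ψt hΨ hΨt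
end

section
/- Let E be a complex inner product space, ψ, ψ' unit vectors in E with φ := ⟪ψ, ψ'⟫ ≠ 0, and let W : E → E be a linear isometry such that W ψ = exp(iθ) • ψ and W ψ' = exp(iθ') • ψ' for real numbers θ, θ'. Then exp(iθ) = exp(iθ'), and for every α ∈ [0,1] the path state satisfies W (Ψ(α)) = exp(iθ) • Ψ(α); consequently the Hamiltonian H(α) x := -(⟪Ψ(α), x⟫ • Ψ(α)) commutes with W: W(H(α) x) = H(α)(W x) for all x ∈ E. (The adiabatic path preserves every symmetry of the two states.) -/
open scoped InnerProductSpace ComplexConjugate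

/-!
An isometry can only act on a nonzero eigenvector by a unimodular scalar `c`, and then
`⟪v, W x⟫ = c ⟪v, x⟫` for all `x`. Applied to `v = ψ, x = ψ'` this forces the two phases to agree
as soon as `⟪ψ, ψ'⟫ ≠ 0`; the path state is a combination of `ψ` and `ψ'`, hence lies in the common
eigenspace, and the same identity shows that `W` commutes with the rank-one projector onto it.
-/

namespace LinearIsometry

variable {𝕜 E : Type*} [RCLike 𝕜] [NormedAddCommGroup E] [InnerProductSpace 𝕜 E]
  (W : E →ₗᵢ[𝕜] E) {v : E} {c : 𝕜}

theorem norm_eq_one_of_apply_eq_smul (hv : W v = c • v) (hv₀ : v ≠ 0) : ‖c‖ = 1 := by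
  have h : ‖c‖ * ‖v‖ = 1 * ‖v‖ := by rw [← norm_smul, ← hv, W.norm_map, one_mul]
  exact mul_right_cancel₀ (norm_ne_zero_iff.2 hv₀) h

theorem inner_map_right_of_apply_eq_smul (hv : W v = c • v) (x : E) :
    ⟪v, W x⟫_𝕜 = c * ⟪v, x⟫_𝕜 := by
  rcases eq_or_ne v 0 with rfl | hv₀
  · simp
  have hc : c * conj c = 1 := by
    rw [RCLike.mul_conj, W.norm_eq_one_of_apply_eq_smul hv hv₀]
    norm_num
  have h : conj c * ⟪v, W x⟫_𝕜 = ⟪v, x⟫_𝕜 := by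
    rw [← inner_smul_left, ← hv, W.inner_map_map]
  rw [← h, ← mul_assoc, hc, one_mul]

theorem eq_of_apply_eq_smul_of_inner_ne_zero {w : E} {d : 𝕜} (hv : W v = c • v)
    (hw : W w = d • w) (hvw : ⟪v, w⟫_𝕜 ≠ 0) : c = d := by
  have h := W.inner_map_right_of_apply_eq_smul hv w
  rw [hw, inner_smul_right] at h
  exact (mul_right_cancel₀ hvw h).symm

theorem map_inner_smul_of_apply_eq_smul (hv : W v = c • v) (x : E) :
    W (⟪v, x⟫_𝕜 • v) = ⟪v, W x⟫_𝕜 • v := by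
  rw [map_smul, hv, smul_smul, W.inner_map_right_of_apply_eq_smul hv, mul_comm]

end LinearIsometry

theorem path_state_symmetry_general {E : Type*} [NormedAddCommGroup E]
    [InnerProductSpace ℂ E] (ψ ψ' : E)
    (hφ : ⟪ψ, ψ'⟫_ℂ ≠ 0) (W : E →ₗᵢ[ℂ] E) (θ θ' : ℝ)
    (hWψ : W ψ = Complex.exp ((θ : ℂ) * Complex.I) • ψ)
    (hWψ' : W ψ' = Complex.exp ((θ' : ℂ) * Complex.I) • ψ')
    (Ψ : ℝ → E)
    (hΨ : ∀ α : ℝ, Ψ α =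
      (Real.sqrt ((1 - α) ^ 2 + α * (2 - α) * ‖⟪ψ, ψ'⟫_ℂ‖ ^ 2))⁻¹ •
        (((1 - α : ℝ) : ℂ) • ψ + ((α : ℂ) * conj ⟪ψ, ψ'⟫_ℂ) • ψ')) :
    Complex.exp ((θ : ℂ) * Complex.I) = Complex.exp ((θ' : ℂ) * Complex.I) ∧
    ∀ α ∈ Set.Icc (0 : ℝ) 1,
      W (Ψ α) = Complex.exp ((θ : ℂ) * Complex.I) • Ψ α ∧
      ∀ x : E, W (-(⟪Ψ α, x⟫_ℂ • Ψ α)) = -(⟪Ψ α, W x⟫_ℂ • Ψ α) := by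
  have hphase := W.eq_of_apply_eq_smul_of_inner_ne_zero hWψ hWψ' hφ
  refine ⟨hphase, fun α _ => ?_⟩
  set V := Module.End.eigenspace W.toLinearMap (Complex.exp ((θ : ℂ) * Complex.I))
  have hψV : ψ ∈ V := Module.End.mem_eigenspace_iff.2 hWψ
  have hψ'V : ψ' ∈ V := Module.End.mem_eigenspace_iff.2 (hphase ▸ hWψ')
  have hΨV : Ψ α ∈ V := hΨ α ▸
    V.smul_of_tower_mem _ (V.add_mem (V.smul_mem _ hψV) (V.smul_mem _ hψ'V))
  have hWΨ : W (Ψ α) = Complex.exp ((θ : ℂ) * Complex.I) • Ψ α :=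
    Module.End.mem_eigenspace_iff.1 hΨV
  exact ⟨hWΨ, fun x => by rw [map_neg, W.map_inner_smul_of_apply_eq_smul hWΨ]⟩

/-- The adiabatic path preserves every symmetry of the two states: if a linear isometry `W`
leaves `ψ` and `ψ'` invariant up to `U(1)` phases `exp(iθ)`, `exp(iθ')`, and the overlap
`⟪ψ, ψ'⟫` is nonzero, then the two phases coincide, the path state `Ψ(α)` is invariant up to
the phase `exp(iθ)`, and the Hamiltonian `H(α) x := -(⟪Ψ(α), x⟫ • Ψ(α))` commutes with `W`. -/
theorem path_state_symmetry {E : Type*} [NormedAddCommGroup E]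
    [InnerProductSpace ℂ E] (ψ ψ' : E) (hψ : ‖ψ‖ = 1) (hψ' : ‖ψ'‖ = 1)
    (hφ : ⟪ψ, ψ'⟫_ℂ ≠ 0) (W : E →ₗᵢ[ℂ] E) (θ θ' : ℝ)
    (hWψ : W ψ = Complex.exp ((θ : ℂ) * Complex.I) • ψ)
    (hWψ' : W ψ' = Complex.exp ((θ' : ℂ) * Complex.I) • ψ')
    (Ψ : ℝ → E)
    (hΨ : ∀ α : ℝ, Ψ α =
      (Real.sqrt ((1 - α) ^ 2 + α * (2 - α) * ‖⟪ψ, ψ'⟫_ℂ‖ ^ 2))⁻¹ •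
        (((1 - α : ℝ) : ℂ) • ψ + ((α : ℂ) * conj ⟪ψ, ψ'⟫_ℂ) • ψ')) :
    Complex.exp ((θ : ℂ) * Complex.I) = Complex.exp ((θ' : ℂ) * Complex.I) ∧
    ∀ α ∈ Set.Icc (0 : ℝ) 1,
      W (Ψ α) = Complex.exp ((θ : ℂ) * Complex.I) • Ψ α ∧
      ∀ x : E, W (-(⟪Ψ α, x⟫_ℂ • Ψ α)) = -(⟪Ψ α, W x⟫_ℂ • Ψ α) :=
  path_state_symmetry_general ψ ψ' hφ W θ θ' hWψ hWψ' Ψ hΨ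
end

section
/- With the multi-band setup below, for all real α and all l, l' : Fin N, the unnormalized path vectors satisfy ⟪w l α, w l' α⟫ = ((1-α)² + α(2-α)·λ l) if l = l', and ⟪w l α, w l' α⟫ = 0 if l ≠ l'. -/
open scoped InnerProductSpace ComplexConjugate Matrix

lemma sum_inner_sum_aux {E : Type*} [NormedAddCommGroup E] [InnerProductSpace ℂ E]
    {N : ℕ} (φ φ' : Fin N → E) (c d : Fin N → ℂ) :
    ⟪∑ n, conj (c n) • φ n, ∑ m, conj (d m) • φ' m⟫_ℂ
      = ∑ n, ∑ m, c n * ⟪φ n, φ' m⟫_ℂ * conj (d m) := by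
  rw [sum_inner]
  refine Finset.sum_congr rfl fun n _ => ?_
  rw [inner_smul_left, inner_sum, Finset.mul_sum]
  refine Finset.sum_congr rfl fun m _ => ?_
  rw [inner_smul_right]
  ring_nf
  simp [mul_comm, mul_left_comm]

/-- Multi-band adiabatic path: the unnormalized path vectors
`w l α := (1-α) • (∑ n, conj(U l n) • ψ n) + α • (∑ n, ∑ m, (conj(U l n) conj(F n m)) • ψ' m)`
satisfy `⟪w l α, w l' α⟫ = (1-α)² + α(2-α)·λ l` if `l = l'` and `0` otherwise. -/
theorem multiband_path_inner {E : Type*} [NormedAddCommGroup E] [InnerProductSpace ℂ E]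
    {N : ℕ} (hN : 1 ≤ N) (ψ ψ' : Fin N → E)
    (hψ : Orthonormal ℂ ψ) (hψ' : Orthonormal ℂ ψ')
    (F U : Matrix (Fin N) (Fin N) ℂ)
    (hF : ∀ n m, F n m = ⟪ψ n, ψ' m⟫_ℂ)
    (hU : U ∈ Matrix.unitaryGroup (Fin N) ℂ)
    (lam : Fin N → ℝ)
    (hdiag : U * F * Fᴴ * Uᴴ = Matrix.diagonal (fun l => (lam l : ℂ)))
    (w : Fin N → ℝ → E)
    (hw : ∀ l (α : ℝ), w l α =
      ((1 - α : ℝ) : ℂ) • (∑ n, conj (U l n) • ψ n) +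
        ((α : ℝ) : ℂ) • (∑ n, ∑ m, (conj (U l n) * conj (F n m)) • ψ' m)) :
    ∀ (α : ℝ) (l l' : Fin N),
      (l = l' → ⟪w l α, w l' α⟫_ℂ = (((1 - α) ^ 2 + α * (2 - α) * lam l : ℝ) : ℂ)) ∧
      (l ≠ l' → ⟪w l α, w l' α⟫_ℂ = 0) := by
  intro α l l'
  set G : Matrix (Fin N) (Fin N) ℂ := U * F with hG
  set A : Fin N → E := fun l => ∑ n, conj (U l n) • ψ n with hA
  set B : Fin N → E := fun l => ∑ m, conj (G l m) • ψ' m with hB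
  have hψψ : ∀ n m, ⟪ψ n, ψ m⟫_ℂ = if n = m then 1 else 0 :=
    fun n m => orthonormal_iff_ite.mp hψ n m
  have hψ'ψ' : ∀ n m, ⟪ψ' n, ψ' m⟫_ℂ = if n = m then 1 else 0 :=
    fun n m => orthonormal_iff_ite.mp hψ' n m
  -- rewrite the double sum in w as B
  have hB' : ∀ l, (∑ n, ∑ m, (conj (U l n) * conj (F n m)) • ψ' m) = B l := by
    intro l
    rw [hB, Finset.sum_comm]
    refine Finset.sum_congr rfl fun m _ => ?_
    rw [← Finset.sum_smul]
    congr 1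
    simp [hG, Matrix.mul_apply, map_sum]
  have hw' : ∀ l, w l α = ((1 - α : ℝ) : ℂ) • A l + ((α : ℝ) : ℂ) • B l := by
    intro l; rw [hw, hB' l]
  -- unitary
  have hUU : U * Uᴴ = 1 := by
    have := hU.2
    simpa [Matrix.star_eq_conjTranspose] using this
  have hAA : ⟪A l, A l'⟫_ℂ = if l = l' then 1 else 0 := by
    rw [hA]
    simp only
    rw [sum_inner_sum_aux]
    have h1 := congrFun (congrFun hUU l) l'
    simp only [Matrix.mul_apply, Matrix.conjTranspose_apply, Matrix.one_apply] at h1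
    rw [← h1]
    refine Finset.sum_congr rfl fun n _ => ?_
    simp [hψψ, mul_ite, ite_mul, Finset.sum_ite_eq]
  -- the diagonalization, in the form G * Gᴴ entries
  have hGG : U * F * Fᴴ * Uᴴ = G * Gᴴ := by
    rw [hG, Matrix.conjTranspose_mul, ← Matrix.mul_assoc]
  have hDD : ∀ l l', ∑ n, G l n * conj (G l' n) = if l = l' then (lam l : ℂ) else 0 := by
    intro l l'
    have h1 := congrFun (congrFun (hGG ▸ hdiag) l) l'
    simpa [Matrix.mul_apply, Matrix.conjTranspose_apply, Matrix.diagonal_apply] using h1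
  have hBB : ⟪B l, B l'⟫_ℂ = if l = l' then (lam l : ℂ) else 0 := by
    rw [hB]
    simp only
    rw [sum_inner_sum_aux, ← hDD l l']
    refine Finset.sum_congr rfl fun n _ => ?_
    simp [hψ'ψ', mul_ite, ite_mul, Finset.sum_ite_eq]
  have hAB : ∀ l l', ⟪A l, B l'⟫_ℂ = if l = l' then (lam l : ℂ) else 0 := by
    intro l l'
    rw [hA, hB]
    simp only
    rw [sum_inner_sum_aux, Finset.sum_comm, ← hDD l l']
    refine Finset.sum_congr rfl fun m _ => ?_
    rw [← Finset.sum_mul]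
    congr 1
    rw [hG, Matrix.mul_apply]
    exact Finset.sum_congr rfl fun n _ => by rw [hF]
  have hBA : ⟪B l, A l'⟫_ℂ = if l = l' then (lam l : ℂ) else 0 := by
    rw [← inner_conj_symm, hAB l' l]
    by_cases h : l = l'
    · subst h; simp
    · simp [h, Ne.symm h]
  constructor
  · intro h
    subst h
    rw [hw' l, inner_add_left, inner_add_right, inner_add_right]
    simp only [inner_smul_left, inner_smul_right, inner_smul_real_left, inner_smul_real_right,
      hAA, hBB, hAB l l, hBA, if_pos rfl, Complex.conj_ofReal, smul_eq_mul]
    push_cast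
    ring
  · intro h
    rw [hw' l, hw' l']
    rw [inner_add_left, inner_add_right, inner_add_right]
    simp only [inner_smul_left, inner_smul_right, inner_smul_real_left, inner_smul_real_right,
      hAA, hBB, hAB l l', hBA, if_neg h, Complex.conj_ofReal, smul_eq_mul]
    ring
end

section
/- With the multi-band setup below, assume additionally that λ l > 0 for every l : Fin N. Then for every α ∈ [0,1] the family of normalized path states (Ψ_l(α))_{l : Fin N}, where Ψ_l(α) := N_l(α)⁻¹ • w l α and N_l(α) := Real.sqrt((1-α)² + α(2-α)·λ l), is an orthonormal family in E. -/
open scoped InnerProductSpace ComplexConjugate Matrix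

/-! Write `a l = ∑ n, conj (U l n) • ψ n` and `b l = ∑ m, conj ((U * F) l m) • ψ' m`, so that
`w l α = (1 - α) • a l + α • b l`. The cross Gram matrix of the families
`∑ n, conj (A l n) • φ n` and `∑ m, conj (B k m) • φ' m` is `A * G * Bᴴ`, where `G` is that of
`φ` and `φ'`. Hence `U * Uᴴ = 1` and `(U * F) * (U * F)ᴴ = diagonal λ` give all four blocks:
`⟪a, a⟫ = 1` and `⟪a, b⟫ = ⟪b, a⟫ = ⟪b, b⟫ = diagonal λ`. So the Gram matrix of `w · α` is
diagonal with entries `(1 - α)² + α (2 - α) λ l`, a convex combination of `1` and `λ l`, hence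
positive, and dividing by their square roots makes it the identity. -/

namespace Matrix

section CrossGram

variable {𝕜 E : Type*} [RCLike 𝕜] [NormedAddCommGroup E] [InnerProductSpace 𝕜 E]
  {ι ι' κ κ' : Type*}

variable (𝕜) in
def crossGram (φ : ι → E) (φ' : ι' → E) : Matrix ι ι' 𝕜 := of fun n m ↦ ⟪φ n, φ' m⟫_𝕜

@[simp]
lemma crossGram_apply (φ : ι → E) (φ' : ι' → E) (n : ι) (m : ι') :
    crossGram 𝕜 φ φ' n m = ⟪φ n, φ' m⟫_𝕜 := rfl

lemma crossGram_sum_conj_smul [Fintype ι] [Fintype ι'] (A : Matrix κ ι 𝕜) (B : Matrix κ' ι' 𝕜)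
    (φ : ι → E) (φ' : ι' → E) :
    crossGram 𝕜 (fun l ↦ ∑ n, conj (A l n) • φ n) (fun k ↦ ∑ m, conj (B k m) • φ' m) =
      A * crossGram 𝕜 φ φ' * Bᴴ := by
  ext l k
  simp only [crossGram_apply, sum_inner, inner_sum, inner_smul_left, inner_smul_right,
    RCLike.conj_conj, mul_apply, conjTranspose_apply, RCLike.star_def, Finset.sum_mul]
  refine Finset.sum_congr rfl fun m _ ↦ ?_
  rw [Finset.mul_sum]
  exact Finset.sum_congr rfl fun n _ ↦ by ring

lemma crossGram_self (v : ι → E) : crossGram 𝕜 v v = gram 𝕜 v := rfl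

lemma crossGram_swap (φ : ι → E) (φ' : ι' → E) :
    crossGram 𝕜 φ' φ = (crossGram 𝕜 φ φ')ᴴ := by
  ext m n
  simp

lemma gram_smul_add_smul (c d : 𝕜) (a b : ι → E) :
    gram 𝕜 (fun l ↦ c • a l + d • b l) =
      (conj c * c) • crossGram 𝕜 a a + (conj c * d) • crossGram 𝕜 a b +
        (conj d * c) • crossGram 𝕜 b a + (conj d * d) • crossGram 𝕜 b b := by
  ext l k
  simp only [gram_apply, crossGram_apply, inner_add_left, inner_add_right, inner_smul_left,
    inner_smul_right, add_apply, smul_apply, smul_eq_mul]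
  ring

lemma sum_conj_mul_apply_smul [Fintype ι] [Fintype ι'] (A : Matrix κ ι 𝕜) (B : Matrix ι ι' 𝕜)
    (φ : ι' → E) (l : κ) :
    ∑ m, conj ((A * B) l m) • φ m = ∑ n, ∑ m, (conj (A l n) * conj (B n m)) • φ m := by
  rw [Finset.sum_comm]
  refine Finset.sum_congr rfl fun m _ ↦ ?_
  simp only [mul_apply, map_sum, map_mul, Finset.sum_smul]

end CrossGram

lemma orthonormal_inv_sqrt_smul_of_gram_eq_diagonal {E ι : Type*} [NormedAddCommGroup E]
    [InnerProductSpace ℂ E] [DecidableEq ι] {v : ι → E} {r : ι → ℝ} (hr : ∀ i, 0 < r i)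
    (h : gram ℂ v = diagonal fun i ↦ (r i : ℂ)) :
    Orthonormal ℂ fun i ↦ (√(r i))⁻¹ • v i := by
  rw [← gram_eq_one_iff_orthonormal]
  ext i j
  have hv := congr_fun₂ h i j
  simp only [gram_apply, diagonal_apply] at hv
  simp only [gram_apply, ← Complex.coe_smul, inner_smul_left, inner_smul_right, hv,
    Complex.conj_ofReal, one_apply]
  split_ifs with hij
  · subst hij
    rw [← Complex.ofReal_mul, ← Complex.ofReal_mul, ← Complex.ofReal_one]
    congr 1
    rw [← mul_assoc, ← mul_inv, Real.mul_self_sqrt (hr i).le, inv_mul_cancel₀ (hr i).ne']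
  · simp

end Matrix

open Matrix

lemma one_sub_sq_add_mul_two_sub_mul_pos {α c : ℝ} (h₀ : 0 ≤ α) (h₂ : α ≤ 2) (hc : 0 < c) :
    0 < (1 - α) ^ 2 + α * (2 - α) * c := by
  have hq : 0 ≤ α * (2 - α) := mul_nonneg h₀ (sub_nonneg.2 h₂)
  rcases le_total c 1 with hc1 | hc1
  · nlinarith [mul_nonneg (sq_nonneg (1 - α)) (sub_nonneg.2 hc1)]
  · nlinarith [mul_nonneg hq (sub_nonneg.2 hc1)]

theorem multiband_path_orthonormal_general {E : Type*} [NormedAddCommGroup E] [InnerProductSpace ℂ E]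
    {N : ℕ} (ψ ψ' : Fin N → E)
    (hψ : Orthonormal ℂ ψ) (hψ' : Orthonormal ℂ ψ')
    (F U : Matrix (Fin N) (Fin N) ℂ)
    (hF : ∀ n m, F n m = ⟪ψ n, ψ' m⟫_ℂ)
    (hU : U ∈ Matrix.unitaryGroup (Fin N) ℂ)
    (lam : Fin N → ℝ)
    (hdiag : U * F * Fᴴ * Uᴴ = Matrix.diagonal (fun l => (lam l : ℂ)))
    (hpos : ∀ l, 0 < lam l)
    (w : Fin N → ℝ → E)
    (hw : ∀ l (α : ℝ), w l α =
      ((1 - α : ℝ) : ℂ) • (∑ n, conj (U l n) • ψ n) +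
        ((α : ℝ) : ℂ) • (∑ n, ∑ m, (conj (U l n) * conj (F n m)) • ψ' m)) :
    ∀ α ∈ Set.Icc (0 : ℝ) 1,
      Orthonormal ℂ (fun l =>
        (Real.sqrt ((1 - α) ^ 2 + α * (2 - α) * lam l))⁻¹ • w l α) := by
  intro α ⟨hα₀, hα₁⟩
  set V := U * F
  have hUU : U * Uᴴ = 1 := mem_unitaryGroup_iff.mp hU
  have hF' : crossGram ℂ ψ ψ' = F := ext fun n m ↦ (hF n m).symm
  have hVV : V * Vᴴ = diagonal fun l ↦ (lam l : ℂ) := by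
    rw [conjTranspose_mul, ← mul_assoc]
    exact hdiag
  set a : Fin N → E := fun l ↦ ∑ n, conj (U l n) • ψ n with ha
  set b : Fin N → E := fun l ↦ ∑ m, conj (V l m) • ψ' m with hb
  have haa : crossGram ℂ a a = 1 := by
    rw [ha, crossGram_sum_conj_smul, crossGram_self, gram_eq_one_iff_orthonormal.mpr hψ,
      mul_one, hUU]
  have hab : crossGram ℂ a b = V * Vᴴ := by rw [ha, hb, crossGram_sum_conj_smul, hF']
  have hba : crossGram ℂ b a = V * Vᴴ := by
    rw [crossGram_swap, hab, (isHermitian_mul_conjTranspose_self V).eq]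
  have hbb : crossGram ℂ b b = V * Vᴴ := by
    rw [hb, crossGram_sum_conj_smul, crossGram_self, gram_eq_one_iff_orthonormal.mpr hψ', mul_one]
  have hw' : (fun l ↦ w l α) = fun l ↦ ((1 - α : ℝ) : ℂ) • a l + ((α : ℝ) : ℂ) • b l :=
    funext fun l ↦ by rw [hw, ← sum_conj_mul_apply_smul]
  have hgram : gram ℂ (fun l ↦ w l α) =
      diagonal fun l ↦ (((1 - α) ^ 2 + α * (2 - α) * lam l : ℝ) : ℂ) := by
    rw [hw', gram_smul_add_smul, haa, hab, hba, hbb, hVV]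
    ext l k
    rcases eq_or_ne l k with rfl | hlk
    · simp only [Matrix.add_apply, Matrix.smul_apply, smul_eq_mul, one_apply_eq,
        diagonal_apply_eq, Complex.conj_ofReal]
      push_cast
      ring
    · simp [hlk]
  exact orthonormal_inv_sqrt_smul_of_gram_eq_diagonal
    (fun l ↦ one_sub_sq_add_mul_two_sub_mul_pos hα₀ (by linarith) (hpos l)) hgram

/-- If all the eigenvalues `λ l` of `F Fᴴ` are positive, then for every `α ∈ [0,1]` the
normalized path states `Ψ_l(α) := N_l(α)⁻¹ • w l α`, with
`N_l(α) := √((1-α)² + α(2-α)·λ l)`, form an orthonormal family. -/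
theorem multiband_path_orthonormal {E : Type*} [NormedAddCommGroup E] [InnerProductSpace ℂ E]
    {N : ℕ} (hN : 1 ≤ N) (ψ ψ' : Fin N → E)
    (hψ : Orthonormal ℂ ψ) (hψ' : Orthonormal ℂ ψ')
    (F U : Matrix (Fin N) (Fin N) ℂ)
    (hF : ∀ n m, F n m = ⟪ψ n, ψ' m⟫_ℂ)
    (hU : U ∈ Matrix.unitaryGroup (Fin N) ℂ)
    (lam : Fin N → ℝ)
    (hdiag : U * F * Fᴴ * Uᴴ = Matrix.diagonal (fun l => (lam l : ℂ)))
    (hpos : ∀ l, 0 < lam l)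
    (w : Fin N → ℝ → E)
    (hw : ∀ l (α : ℝ), w l α =
      ((1 - α : ℝ) : ℂ) • (∑ n, conj (U l n) • ψ n) +
        ((α : ℝ) : ℂ) • (∑ n, ∑ m, (conj (U l n) * conj (F n m)) • ψ' m)) :
    ∀ α ∈ Set.Icc (0 : ℝ) 1,
      Orthonormal ℂ (fun l =>
        (Real.sqrt ((1 - α) ^ 2 + α * (2 - α) * lam l))⁻¹ • w l α) :=
  multiband_path_orthonormal_general ψ ψ' hψ hψ' F U hF hU lam hdiag hpos w hw
end

section
/- With the multi-band setup below, assume det F ≠ 0, and define for each l : Fin N the vector χ_l := (Real.sqrt (λ l))⁻¹ • (∑_n ∑_m (conj(U l n) * conj(F n m)) • ψ' m). Then for every x ∈ E, ∑_l ⟪χ_l, x⟫ • χ_l = ∑_m ⟪ψ' m, x⟫ • ψ' m. (At α = 1 the projector onto the path states equals the projector onto the valence bands of insulator II, so the ground state of H(1) coincides with that of insulator II.) -/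
open scoped InnerProductSpace ComplexConjugate Matrix

/-!
With `M := U F`, the matrix `B := λ^{-1/2} M` satisfies `B Bᴴ = λ^{-1/2} (M Mᴴ) λ^{-1/2} = 1`;
here `λ > 0` because `M Mᴴ` is positive semidefinite and invertible. A square matrix with
orthonormal rows also has orthonormal columns, and `χ_l = ∑ₘ conj (B l m) • ψ' m`. The sum
`∑ ⟪v, x⟫ • v` over a family `v` does not change when `v` is mixed by a matrix with orthonormal
columns, since its coefficients transform by `Bᴴ B = 1`.
-/

section
variable {𝕜 E ι κ : Type*} [RCLike 𝕜] [NormedAddCommGroup E] [InnerProductSpace 𝕜 E]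
  [Fintype ι] [Fintype κ] [DecidableEq κ]

theorem sum_inner_smul_eq_of_conjTranspose_mul_self_eq_one {B : Matrix ι κ 𝕜}
    (hB : Bᴴ * B = 1) (v : κ → E) (x : E) :
    ∑ l, ⟪∑ m, conj (B l m) • v m, x⟫_𝕜 • ∑ m, conj (B l m) • v m =
      ∑ m, ⟪v m, x⟫_𝕜 • v m := by
  calc ∑ l, ⟪∑ m, conj (B l m) • v m, x⟫_𝕜 • ∑ m, conj (B l m) • v m
      = ∑ m', ((Bᴴ * B) *ᵥ fun m => ⟪v m, x⟫_𝕜) m' • v m' := by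
        simp only [sum_inner, inner_smul_left, RCLike.conj_conj, Finset.smul_sum, smul_smul,
          Matrix.mulVec, dotProduct, Matrix.mul_apply, Matrix.conjTranspose_apply, Finset.sum_mul,
          Finset.sum_smul, RCLike.star_def]
        rw [Finset.sum_comm]
        refine Finset.sum_congr rfl fun m' _ => ?_
        rw [Finset.sum_comm]
        refine Finset.sum_congr rfl fun m _ => ?_
        refine Finset.sum_congr rfl fun l _ => ?_
        congr 1
        ring
    _ = ∑ m, ⟪v m, x⟫_𝕜 • v m := by rw [hB, Matrix.one_mulVec]
end

namespace Matrix
variable {𝕜 ι : Type*} [RCLike 𝕜] [Fintype ι] [DecidableEq ι]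

open scoped ComplexOrder in
theorem pos_of_mul_conjTranspose_eq_diagonal {M : Matrix ι ι 𝕜} {d : ι → ℝ}
    (hM : M * Mᴴ = diagonal fun l => (d l : 𝕜)) (hdet : IsUnit M.det) (l : ι) : 0 < d l := by
  have hnonneg : 0 ≤ d l := by
    have := (posSemidef_self_mul_conjTranspose M).diag_nonneg (i := l)
    rwa [hM, diagonal_apply_eq, RCLike.ofReal_nonneg] at this
  have hprod : IsUnit (∏ l, (d l : 𝕜)) := by
    rw [← det_diagonal, ← hM, det_mul, det_conjTranspose]
    exact hdet.mul hdet.star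
  have hne : (d l : 𝕜) ≠ 0 :=
    (Finset.prod_ne_zero_iff.mp hprod.ne_zero) l (Finset.mem_univ l)
  exact hnonneg.lt_of_ne (by exact_mod_cast hne.symm)

theorem conjTranspose_mul_self_eq_one_of_mul_conjTranspose_eq_diagonal {M : Matrix ι ι 𝕜}
    {d : ι → ℝ} (hM : M * Mᴴ = diagonal fun l => (d l : 𝕜)) (hdet : IsUnit M.det) :
    (diagonal (fun l => (((Real.sqrt (d l))⁻¹ : ℝ) : 𝕜)) * M)ᴴ *
      (diagonal (fun l => (((Real.sqrt (d l))⁻¹ : ℝ) : 𝕜)) * M) = 1 := by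
  rw [mul_eq_one_comm, conjTranspose_mul, diagonal_conjTranspose, Matrix.mul_assoc,
    ← Matrix.mul_assoc M, hM]
  simp only [Pi.star_def, RCLike.star_def, RCLike.conj_ofReal, diagonal_mul_diagonal]
  rw [← diagonal_one]
  congr 1
  funext l
  have hd := pos_of_mul_conjTranspose_eq_diagonal hM hdet l
  rw [← RCLike.ofReal_mul, ← RCLike.ofReal_mul, ← RCLike.ofReal_one]
  congr 1
  rw [mul_left_comm, ← mul_inv, Real.mul_self_sqrt hd.le, mul_inv_cancel₀ hd.ne']
end Matrix

theorem endpoint_projector_eq_general {E : Type*} [NormedAddCommGroup E] [InnerProductSpace ℂ E]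
    {N : ℕ} (ψ' : Fin N → E)
    (F U : Matrix (Fin N) (Fin N) ℂ)
    (hU : U ∈ Matrix.unitaryGroup (Fin N) ℂ)
    (lam : Fin N → ℝ)
    (hdiag : U * F * Fᴴ * Uᴴ = Matrix.diagonal (fun l => (lam l : ℂ)))
    (hdet : F.det ≠ 0)
    (χ : Fin N → E)
    (hχ : ∀ l, χ l =
      (((Real.sqrt (lam l))⁻¹ : ℝ) : ℂ) •
        (∑ n, ∑ m, (conj (U l n) * conj (F n m)) • ψ' m)) :
    ∀ x : E, ∑ l, ⟪χ l, x⟫_ℂ • χ l = ∑ m, ⟪ψ' m, x⟫_ℂ • ψ' m := by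
  intro x
  set B := Matrix.diagonal (fun l => (((Real.sqrt (lam l))⁻¹ : ℝ) : ℂ)) * (U * F)
  have hB : Bᴴ * B = 1 := by
    refine Matrix.conjTranspose_mul_self_eq_one_of_mul_conjTranspose_eq_diagonal ?_ ?_
    · rw [Matrix.conjTranspose_mul, ← Matrix.mul_assoc]
      exact hdiag
    · rw [Matrix.det_mul]
      exact (Matrix.UnitaryGroup.det_isUnit ⟨U, hU⟩).mul (isUnit_iff_ne_zero.mpr hdet)
  have hχB : χ = fun l => ∑ m, conj (B l m) • ψ' m := by
    funext l
    simp only [B, Matrix.diagonal_mul]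
    simp only [hχ, Matrix.mul_apply, map_mul, map_sum,
      Complex.conj_ofReal, Finset.mul_sum, Finset.smul_sum, Finset.sum_smul, mul_smul]
    rw [Finset.sum_comm]
  rw [hχB]
  exact sum_inner_smul_eq_of_conjTranspose_mul_self_eq_one hB ψ' x

/-- At `α = 1` the projector onto the path states
`χ_l := (√(λ l))⁻¹ • (∑ n, ∑ m, (conj(U l n) conj(F n m)) • ψ' m)` equals the projector onto
the valence bands of insulator II: `∑ l, ⟪χ_l, x⟫ • χ_l = ∑ m, ⟪ψ' m, x⟫ • ψ' m`. -/
theorem endpoint_projector_eq {E : Type*} [NormedAddCommGroup E] [InnerProductSpace ℂ E]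
    {N : ℕ} (hN : 1 ≤ N) (ψ ψ' : Fin N → E)
    (hψ : Orthonormal ℂ ψ) (hψ' : Orthonormal ℂ ψ')
    (F U : Matrix (Fin N) (Fin N) ℂ)
    (hF : ∀ n m, F n m = ⟪ψ n, ψ' m⟫_ℂ)
    (hU : U ∈ Matrix.unitaryGroup (Fin N) ℂ)
    (lam : Fin N → ℝ)
    (hdiag : U * F * Fᴴ * Uᴴ = Matrix.diagonal (fun l => (lam l : ℂ)))
    (hdet : F.det ≠ 0)
    (χ : Fin N → E)
    (hχ : ∀ l, χ l =
      (((Real.sqrt (lam l))⁻¹ : ℝ) : ℂ) •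
        (∑ n, ∑ m, (conj (U l n) * conj (F n m)) • ψ' m)) :
    ∀ x : E, ∑ l, ⟪χ l, x⟫_ℂ • χ l = ∑ m, ⟪ψ' m, x⟫_ℂ • ψ' m :=
  endpoint_projector_eq_general ψ' F U hU lam hdiag hdet χ hχ
end

section
/- Let E be a complex Hilbert space and let ψ, ψ' : Fin N → E be two orthonormal families such that the overlap matrix F, defined by F n m := ⟪ψ n, ψ' m⟫, has det F ≠ 0. Then there exists a family of continuous linear operators P(α) : E →L[ℂ] E, depending continuously (in operator norm) on α ∈ [0,1], such that: each P(α) is an orthogonal projection (P(α)² = P(α) and P(α) is self-adjoint) whose range has dimension N; P(0) is the orthogonal projection onto the span of {ψ n}; and P(1) is the orthogonal projection onto the span of {ψ' m}. (Two band insulators with nonvanishing Bloch-wavefunction overlap are adiabatically connected without closing the gap.) -/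
open scoped InnerProductSpace Matrix

/-!
Interpolate each valence state linearly towards its orthogonal projection onto `K' = span ψ'`:
`v α n = (1 - α) • ψ n + α • P_{K'} (ψ n)`. As `P_{K'} (ψ n) - ψ n ⊥ K'`, the overlaps
`⟪v α n, ψ' m⟫ = ⟪ψ n, ψ' m⟫` do not depend on `α`, so `det F ≠ 0` keeps `v α` linearly
independent along the whole path. Take `P α` to be the orthogonal projection onto `span (v α)`;
it depends continuously on `α` through the Gram-matrix formula `P = ∑ᵢⱼ (G⁻¹)ᵢⱼ |vᵢ⟩⟨vⱼ|`.
At `α = 1` the span of `v 1` is an `N`-dimensional subspace of `K'`, hence equal to `K'`.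
-/

open Submodule Matrix InnerProductSpace

instance Submodule.finiteDimensional_span_range {𝕜 E ι : Type*} [DivisionRing 𝕜]
    [AddCommGroup E] [Module 𝕜 E] [Finite ι] (v : ι → E) :
    FiniteDimensional 𝕜 (span 𝕜 (Set.range v)) :=
  FiniteDimensional.span_of_finite 𝕜 (Set.finite_range v)

section GramProjection

variable (𝕜 : Type*) {E ι : Type*} [RCLike 𝕜] [NormedAddCommGroup E] [InnerProductSpace 𝕜 E]
  [Fintype ι] [DecidableEq ι]

noncomputable def gramProjection (v : ι → E) : E →L[𝕜] E :=
  ∑ i, ∑ j, (gram 𝕜 v)⁻¹ i j • rankOne 𝕜 (v i) (v j)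

variable {𝕜}

theorem gramProjection_apply (v : ι → E) (x : E) :
    gramProjection 𝕜 v x = ∑ i, ((gram 𝕜 v)⁻¹ *ᵥ fun j => ⟪v j, x⟫_𝕜) i • v i := by
  simp [gramProjection, mulVec, dotProduct, Finset.sum_smul, smul_smul]

theorem inner_gramProjection {v : ι → E} (hv : LinearIndependent 𝕜 v) (j : ι) (x : E) :
    ⟪v j, gramProjection 𝕜 v x⟫_𝕜 = ⟪v j, x⟫_𝕜 := by
  have hG : gram 𝕜 v * (gram 𝕜 v)⁻¹ = 1 :=
    mul_nonsing_inv _ (det_gram_ne_zero_iff_linearIndependent.mpr hv).isUnit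
  simp only [gramProjection_apply, inner_sum, inner_smul_right]
  calc ∑ i, ((gram 𝕜 v)⁻¹ *ᵥ fun j => ⟪v j, x⟫_𝕜) i * ⟪v j, v i⟫_𝕜
      = (gram 𝕜 v *ᵥ (gram 𝕜 v)⁻¹ *ᵥ fun j => ⟪v j, x⟫_𝕜) j := by
        simp [mulVec, dotProduct, gram, mul_comm]
    _ = ⟪v j, x⟫_𝕜 := by rw [mulVec_mulVec, hG, one_mulVec]

theorem gramProjection_eq_starProjection {v : ι → E} (hv : LinearIndependent 𝕜 v) :
    gramProjection 𝕜 v = (span 𝕜 (Set.range v)).starProjection := by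
  ext x
  refine (eq_starProjection_of_mem_of_inner_eq_zero ?_ ?_).symm
  · rw [gramProjection_apply]
    exact sum_mem fun i _ => smul_mem _ _ (subset_span ⟨i, rfl⟩)
  · intro w hw
    obtain ⟨c, rfl⟩ := mem_span_range_iff_exists_fun 𝕜 |>.mp hw
    rw [inner_eq_zero_symm]
    simp [sum_inner, inner_smul_left, inner_sub_right, inner_gramProjection hv]

theorem continuousOn_starProjection_span {X : Type*} [TopologicalSpace X] {v : X → ι → E}
    {s : Set X} (hv : ∀ i, Continuous fun x => v x i) (hs : ∀ x ∈ s, LinearIndependent 𝕜 (v x)) :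
    ContinuousOn (fun x => (span 𝕜 (Set.range (v x))).starProjection) s := by
  have hgram : Continuous fun x => gram 𝕜 (v x) :=
    continuous_matrix fun i j => (hv i).inner (hv j)
  have hgram_inv : ContinuousOn (fun x => (gram 𝕜 (v x))⁻¹) s := by
    intro x hx
    have hdet : ContinuousAt Ring.inverse (gram 𝕜 (v x)).det := by
      rw [Ring.inverse_eq_inv']
      exact continuousAt_inv₀ (det_gram_ne_zero_iff_linearIndependent.mpr (hs x hx))
    exact (continuousAt_matrix_inv _ hdet).comp_continuousWithinAt (f := fun x => gram 𝕜 (v x))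
      hgram.continuousWithinAt
  refine ContinuousOn.congr ?_ fun x hx => (gramProjection_eq_starProjection (hs x hx)).symm
  refine continuousOn_finsetSum _ fun i _ => continuousOn_finsetSum _ fun j _ => ?_
  have hentry := (continuous_id.matrix_elem i j).comp_continuousOn hgram_inv
  have hrankOne : Continuous fun x => rankOne 𝕜 (v x i) (v x j) :=
    isBoundedBilinearMap_smulRight.continuous.comp
      (((innerSL 𝕜).continuous.comp (hv j)).prodMk (hv i))
  exact hentry.smul hrankOne.continuousOn

theorem Orthonormal.starProjection_span_range_apply {v : ι → E} (hv : Orthonormal 𝕜 v) (x : E) :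
    (span 𝕜 (Set.range v)).starProjection x = ∑ i, ⟪v i, x⟫_𝕜 • v i := by
  rw [← gramProjection_eq_starProjection hv.linearIndependent, gramProjection_apply,
    gram_eq_one_iff_orthonormal.mpr hv, inv_one, one_mulVec]

end GramProjection

section InnerOverlap

variable {𝕜 E ι : Type*} [RCLike 𝕜] [NormedAddCommGroup E] [InnerProductSpace 𝕜 E]

theorem linearIndependent_of_det_inner_ne_zero [Fintype ι] [DecidableEq ι] {w u : ι → E}
    (h : (Matrix.of fun i j => ⟪w i, u j⟫_𝕜).det ≠ 0) : LinearIndependent 𝕜 w := by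
  let f : E →ₗ[𝕜] ι → 𝕜 := LinearMap.pi fun j => (innerSL 𝕜 (u j) : E →ₗ[𝕜] 𝕜)
  have hcomp : ⇑f ∘ w = (Matrix.of fun i j => ⟪w i, u j⟫_𝕜)ᴴ.col := by
    ext i j
    simp [f, col, conjTranspose_apply]
  refine LinearIndependent.of_comp f ?_
  rw [hcomp]
  exact linearIndependent_cols_of_det_ne_zero (by rwa [det_conjTranspose, star_ne_zero])

theorem Submodule.inner_lineMap_starProjection_left {K : Submodule 𝕜 E}
    [K.HasOrthogonalProjection] {u : E} (hu : u ∈ K) (y : E) (t : 𝕜) :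
    ⟪AffineMap.lineMap y (K.starProjection y) t, u⟫_𝕜 = ⟪y, u⟫_𝕜 := by
  have hperp : ⟪K.starProjection y - y, u⟫_𝕜 = 0 := by
    rw [← neg_sub, inner_neg_left, K.inner_left_of_mem_orthogonal hu
      (K.sub_starProjection_mem_orthogonal y), neg_zero]
  rw [AffineMap.lineMap_apply_module', inner_add_left, inner_smul_left, hperp, mul_zero, zero_add]

end InnerOverlap

/-- Two band insulators with nonvanishing Bloch-wavefunction overlap are adiabatically
connected without closing the gap: there is a norm-continuous family of rank-`N`
orthogonal projections `P(α)`, `α ∈ [0,1]`, starting at the projection onto the span of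
the valence-band states `ψ` and ending at the projection onto the span of `ψ'`. -/
theorem adiabatic_connection_of_overlap_det_ne_zero {E : Type*} [NormedAddCommGroup E]
    [InnerProductSpace ℂ E] [CompleteSpace E] {N : ℕ} (ψ ψ' : Fin N → E)
    (hψ : Orthonormal ℂ ψ) (hψ' : Orthonormal ℂ ψ')
    (hdet : (Matrix.of fun n m => ⟪ψ n, ψ' m⟫_ℂ).det ≠ 0) :
    ∃ P : ℝ → E →L[ℂ] E,
      ContinuousOn P (Set.Icc (0 : ℝ) 1) ∧
      (∀ α ∈ Set.Icc (0 : ℝ) 1,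
        (P α).comp (P α) = P α ∧ IsSelfAdjoint (P α) ∧
        Module.finrank ℂ (LinearMap.range (P α : E →ₗ[ℂ] E)) = N) ∧
      (∀ x : E, P 0 x = ∑ n, ⟪ψ n, x⟫_ℂ • ψ n) ∧
      (∀ x : E, P 1 x = ∑ m, ⟪ψ' m, x⟫_ℂ • ψ' m) := by
  set K' := span ℂ (Set.range ψ')
  let v : ℝ → Fin N → E := fun α n => AffineMap.lineMap (ψ n) (K'.starProjection (ψ n)) (α : ℂ)
  have hoverlap : ∀ α,
      (Matrix.of fun n m => ⟪v α n, ψ' m⟫_ℂ) = Matrix.of fun n m => ⟪ψ n, ψ' m⟫_ℂ :=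
    fun α => Matrix.ext fun n m =>
      inner_lineMap_starProjection_left (subset_span (Set.mem_range_self m)) _ _
  have hv : ∀ α, LinearIndependent ℂ (v α) := fun α =>
    linearIndependent_of_det_inner_ne_zero (by rwa [hoverlap])
  have hspan_one : span ℂ (Set.range (v 1)) = K' := by
    refine eq_of_le_of_finrank_eq ?_ ?_
    · rw [span_le]
      rintro _ ⟨n, rfl⟩
      simp [v, K'.starProjection_apply_mem (ψ n)]
    · rw [finrank_span_eq_card (hv 1), finrank_span_eq_card hψ'.linearIndependent]
  refine ⟨fun α => (span ℂ (Set.range (v α))).starProjection, ?_,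
    fun α _ => ⟨?_, isSelfAdjoint_starProjection _, ?_⟩, fun x => ?_, fun x => ?_⟩
  · exact continuousOn_starProjection_span
      (fun n => AffineMap.lineMap_continuous.comp Complex.continuous_ofReal) fun α _ => hv α
  · exact (isIdempotentElem_starProjection _).eq
  · dsimp only
    rw [range_starProjection, finrank_span_eq_card (hv α), Fintype.card_fin]
  · simp [v, hψ.starProjection_span_range_apply x]
  · simp only [hspan_one]
    exact hψ'.starProjection_span_range_apply x
end
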